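/- arXiv:1912.09160 — 4 statements merged into one kernel-verified Lean document; each statement's English description precedes it below -/
import Mathlib

section
/- Let $\varphi \in C^\infty(\mathbb{R})$ be a bounded 1-periodic function with bounded derivative, and define $u(x) = \varphi(\ln x)$ on $\Omega = (0,1)$. Then there is a constant $C > 0$ such that for all $0 < h \leq t \leq 1$, $\int_0^{1-h} |u(x+h) - u(x)|^2\,dx \leq C h$, i.e., the first-order $L^2$ modulus of smoothness satisfies $\omega_1(u,t)_2 \leq C t^{1/2}$. -/
open MeasureTheory Set

/-- Endpoint modulus-of-smoothness bound for `u(x) = φ(ln x)` with `φ` smooth,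
bounded, 1-periodic with bounded derivative. -/
theorem stmt0 (φ : ℝ → ℝ) (hφ : ContDiff ℝ (⊤ : ℕ∞) φ)
    (hper : Function.Periodic φ 1)
    (Mφ Mφ' : ℝ) (hbd : ∀ x, |φ x| ≤ Mφ) (hbd' : ∀ x, |deriv φ x| ≤ Mφ') :
    ∃ C > 0, ∀ h t : ℝ, 0 < h → h ≤ t → t ≤ 1 →
      ∫ x in Ioo (0:ℝ) (1 - h), (φ (Real.log (x + h)) - φ (Real.log x))^2 ≤ C * h := by
  have hMφ : 0 ≤ Mφ := (abs_nonneg _).trans (hbd 0)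
  have hMφ' : 0 ≤ Mφ' := (abs_nonneg _).trans (hbd' 0)
  have hdiff : Differentiable ℝ φ := hφ.differentiable (by simp)
  have hlip : ∀ a b : ℝ, |φ a - φ b| ≤ Mφ' * |a - b| := by
    intro a b
    have := convex_univ.norm_image_sub_le_of_norm_deriv_le
      (f := φ) (fun x _ => hdiff x) (fun x _ => hbd' x) (mem_univ b) (mem_univ a)
    simpa [Real.norm_eq_abs] using this
  refine ⟨4 * Mφ ^ 2 + Mφ' ^ 2 + 1, by positivity, ?_⟩
  intro h t hh hht ht1
  have hh1 : h ≤ 1 := hht.trans ht1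
  set f : ℝ → ℝ := fun x => (φ (Real.log (x + h)) - φ (Real.log x)) ^ 2 with hf
  have hfm : Measurable f := by
    apply Measurable.pow_const
    exact ((hφ.continuous.measurable.comp
      (Real.measurable_log.comp (measurable_id.add_const h))).sub
      (hφ.continuous.measurable.comp Real.measurable_log))
  have hfnonneg : ∀ x, 0 ≤ f x := fun x => sq_nonneg _
  have hfbd : ∀ x, f x ≤ (2 * Mφ) ^ 2 := by
    intro x
    have h1 : |φ (Real.log (x + h)) - φ (Real.log x)| ≤ 2 * Mφ := by
      calc |φ (Real.log (x + h)) - φ (Real.log x)|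
          ≤ |φ (Real.log (x + h))| + |φ (Real.log x)| := abs_sub _ _
        _ ≤ 2 * Mφ := by linarith [hbd (Real.log (x + h)), hbd (Real.log x)]
    have := abs_le.mp h1
    exact sq_le_sq' (by linarith) (by linarith)
  -- integrability of f on any finite-measure set
  have hintf : ∀ s : Set ℝ, volume s < ⊤ → IntegrableOn f s := by
    intro s hs
    haveI : IsFiniteMeasure (volume.restrict s) :=
      ⟨by rwa [Measure.restrict_apply_univ]⟩
    refine Integrable.mono' (integrable_const ((2 * Mφ) ^ 2))
      hfm.aestronglyMeasurable (Filter.Eventually.of_forall fun x => ?_)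
    rw [Real.norm_eq_abs, abs_of_nonneg (hfnonneg x)]
    exact hfbd x
  -- bound of the integral of f on Ioo a b by (2Mφ)^2 * (b - a)
  have hbound1 : ∀ a b : ℝ, a ≤ b →
      ∫ x in Ioo a b, f x ≤ (2 * Mφ) ^ 2 * (b - a) := by
    intro a b hab
    have hvol : volume (Ioo a b) < ⊤ := by
      rw [Real.volume_Ioo]; exact ENNReal.ofReal_lt_top
    have := norm_setIntegral_le_of_norm_le_const (μ := volume) (s := Ioo a b)
      (f := f) hvol (fun x _ => by
        rw [Real.norm_eq_abs, abs_of_nonneg (hfnonneg x)]; exact hfbd x)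
    have hvr : (volume (Ioo a b)).toReal = b - a := by
      rw [Real.volume_Ioo, ENNReal.toReal_ofReal (by linarith)]
    calc ∫ x in Ioo a b, f x ≤ ‖∫ x in Ioo a b, f x‖ := le_abs_self _
      _ ≤ (2 * Mφ) ^ 2 * (volume (Ioo a b)).toReal := this
      _ = (2 * Mφ) ^ 2 * (b - a) := by rw [hvr]
  by_cases hc : 1 - h ≤ h
  · -- whole interval is short
    have hle : (0:ℝ) ≤ 1 - h := by linarith
    calc ∫ x in Ioo (0:ℝ) (1 - h), f x ≤ (2 * Mφ) ^ 2 * (1 - h - 0) := hbound1 _ _ (by linarith)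
      _ ≤ (2 * Mφ) ^ 2 * h := by
          apply mul_le_mul_of_nonneg_left (by linarith) (by positivity)
      _ ≤ (4 * Mφ ^ 2 + Mφ' ^ 2 + 1) * h := by nlinarith
  · push_neg at hc
    -- split at h
    have hsplit : Ioo (0:ℝ) (1 - h) = Ioo 0 h ∪ Ico h (1 - h) :=
      (Ioo_union_Ico_eq_Ioo hh hc.le).symm
    have hdisj : Disjoint (Ioo (0:ℝ) h) (Ico h (1 - h)) := by
      rw [Set.disjoint_left]
      intro x hx1 hx2
      exact absurd hx2.1 (not_le.2 hx1.2)
    have hint1 : IntegrableOn f (Ioo 0 h) := hintf _ (by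
      rw [Real.volume_Ioo]; exact ENNReal.ofReal_lt_top)
    have hint2 : IntegrableOn f (Ico h (1 - h)) := hintf _ (by
      rw [Real.volume_Ico]; exact ENNReal.ofReal_lt_top)
    rw [hsplit, setIntegral_union hdisj measurableSet_Ico hint1 hint2]
    -- first piece
    have hp1 : ∫ x in Ioo (0:ℝ) h, f x ≤ (2 * Mφ) ^ 2 * h := by
      have := hbound1 0 h hh.le
      simpa using this
    -- pointwise bound on second piece
    set g : ℝ → ℝ := fun x => (Mφ' * h) ^ 2 / x ^ 2 with hg
    have hptw : ∀ x ∈ Ico h (1 - h), f x ≤ g x := by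
      intro x hx
      have hxpos : 0 < x := lt_of_lt_of_le hh hx.1
      have hxh : 0 < x + h := by linarith
      have hlog : |Real.log (x + h) - Real.log x| ≤ h / x := by
        rw [← Real.log_div (ne_of_gt hxh) (ne_of_gt hxpos)]
        have h2 : 0 ≤ Real.log ((x + h) / x) :=
          Real.log_nonneg (by rw [le_div_iff₀ hxpos]; linarith)
        rw [abs_of_nonneg h2]
        have h1 : Real.log ((x + h) / x) ≤ (x + h) / x - 1 :=
          Real.log_le_sub_one_of_pos (by positivity)
        have h3 : (x + h) / x - 1 = h / x := by field_simp; ring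
        rw [h3] at h1
        linarith
      have habs : |φ (Real.log (x + h)) - φ (Real.log x)| ≤ Mφ' * (h / x) := by
        calc |φ (Real.log (x + h)) - φ (Real.log x)|
            ≤ Mφ' * |Real.log (x + h) - Real.log x| := hlip _ _
          _ ≤ Mφ' * (h / x) := by
              exact mul_le_mul_of_nonneg_left hlog hMφ'
      have hrhs : (Mφ' * (h / x)) ^ 2 = g x := by
        rw [hg]; field_simp
      have := abs_le.mp habs
      calc f x ≤ (Mφ' * (h / x)) ^ 2 := sq_le_sq' (by linarith) (by linarith)
        _ = g x := hrhs
    -- integrability of g on Ico h (1-h)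
    have hgint : IntegrableOn g (Ico h (1 - h)) := by
      have hcont : ContinuousOn g (Icc h (1 - h)) := by
        apply ContinuousOn.div continuousOn_const (continuousOn_pow 2)
        intro x hx
        have hxpos : 0 < x := lt_of_lt_of_le hh hx.1
        positivity
      exact (hcont.integrableOn_Icc).mono_set Ico_subset_Icc_self
    -- integral of g
    have hgval : ∫ x in Ico h (1 - h), g x ≤ Mφ' ^ 2 * h := by
      have e1 : ∫ x in Ico h (1 - h), g x = ∫ x in Ioo h (1 - h), g x :=
        integral_Ico_eq_integral_Ioo
      have e2 : ∫ x in Ioo h (1 - h), g x = ∫ x in Ioc h (1 - h), g x :=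
        (integral_Ioc_eq_integral_Ioo).symm
      have e3 : ∫ x in Ioc h (1 - h), g x = ∫ x in h..(1 - h), g x :=
        (intervalIntegral.integral_of_le hc.le).symm
      have e4 : ∫ x in h..(1 - h), g x = (Mφ' * h) ^ 2 * ∫ x in h..(1 - h), (x:ℝ) ^ (-2:ℤ) := by
        rw [← intervalIntegral.integral_const_mul]
        apply intervalIntegral.integral_congr
        intro x hx
        have hxpos : 0 < x := by
          rcases le_total h (1 - h) with hle | hle
          · rw [uIcc_of_le hle] at hx; exact lt_of_lt_of_le hh hx.1
          · rw [uIcc_of_ge hle] at hx; exact lt_of_lt_of_le (by linarith) hx.1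
        have hz : (x:ℝ) ^ (-2:ℤ) = (x ^ 2)⁻¹ := by
          rw [zpow_neg]; norm_cast
        show (Mφ' * h) ^ 2 / x ^ 2 = (Mφ' * h) ^ 2 * (x:ℝ) ^ (-2:ℤ)
        rw [hz, div_eq_mul_inv]
      have hzero : (0:ℝ) ∉ Set.uIcc h (1 - h) := by
        rw [uIcc_of_le hc.le]
        intro hmem
        exact absurd hmem.1 (not_le.2 hh)
      have e5 : ∫ x in h..(1 - h), (x:ℝ) ^ (-2:ℤ) = h⁻¹ - (1 - h)⁻¹ := by
        rw [integral_zpow (Or.inr ⟨by norm_num, hzero⟩)]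
        norm_num
        ring
      rw [e1, e2, e3, e4, e5]
      have hinv : (0:ℝ) ≤ (1 - h)⁻¹ := inv_nonneg.mpr (by linarith)
      have : (Mφ' * h) ^ 2 * (h⁻¹ - (1 - h)⁻¹) ≤ (Mφ' * h) ^ 2 * h⁻¹ := by
        apply mul_le_mul_of_nonneg_left (by linarith) (by positivity)
      have heq : (Mφ' * h) ^ 2 * h⁻¹ = Mφ' ^ 2 * h := by
        field_simp
      linarith [heq ▸ this]
    have hp2 : ∫ x in Ico h (1 - h), f x ≤ Mφ' ^ 2 * h := by
      calc ∫ x in Ico h (1 - h), f x ≤ ∫ x in Ico h (1 - h), g x :=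
            setIntegral_mono_on hint2 hgint measurableSet_Ico hptw
        _ ≤ Mφ' ^ 2 * h := hgval
    calc (∫ x in Ioo (0:ℝ) h, f x) + ∫ x in Ico h (1 - h), f x
        ≤ (2 * Mφ) ^ 2 * h + Mφ' ^ 2 * h := add_le_add hp1 hp2
      _ ≤ (4 * Mφ ^ 2 + Mφ' ^ 2 + 1) * h := by nlinarith
end

section
/- Let $u$ be a bounded measurable function on $(0,1)$ taking only two distinct values $a \neq b$, piecewise constant on intervals with break points $x_j = e^{-2j}$, alternating between $a$ and $b$ on consecutive intervals. Then for the modulus of smoothness $\omega_1(u,t)_2$ there is $c > 0$ such that for all sufficiently small $t > 0$, $\omega_1(u,t)_2^2 \geq c\, |a-b|^2\, t\, |\ln t|$. In particular $\sup_{t>0} t^{-1/2}\omega_1(u,t)_2 = \infty$, so $u \notin B^{1/2}_{2,\infty}(0,1)$. -/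
/-!
Let `t` be small. For each of the `≈ |ln t| / 2` break points `e^{-2(j+1)}` with
`t ≤ e^{-2(j+2)}`, the window of length `t` just to its left is carried by `x ↦ x + t` across
that break point and no other, so `|u(x+t) - u(x)|² = |a-b|²` there. The windows are disjoint,
whence `ω₁(u,t)₂² ≥ |a-b|² t |ln t| / 4`, and `t^{-1/2} ω₁(u,t)₂ ≳ |ln t|^{1/2}` is unbounded.
Since `u` is prescribed only off the null set of break points, all integrals are computed for a
measurable representative.
-/

open MeasureTheory Set Real

def meshPiece (j : ℕ) : Set ℝ := Ioo (exp (-(2 * ((j : ℝ) + 1)))) (exp (-(2 * (j : ℝ))))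

lemma mem_meshPiece_iff {j : ℕ} {x : ℝ} :
    x ∈ meshPiece j ↔ 0 < x ∧ 2 * j < -log x ∧ -log x < 2 * j + 2 := by
  constructor
  · rintro ⟨h₁, h₂⟩
    have hx : 0 < x := (exp_pos _).trans h₁
    refine ⟨hx, ?_, ?_⟩
    · linarith [(log_lt_iff_lt_exp hx).2 h₂]
    · linarith [(lt_log_iff_exp_lt hx).2 h₁]
  · rintro ⟨hx, h₁, h₂⟩
    exact ⟨(lt_log_iff_exp_lt hx).1 (by linarith), (log_lt_iff_lt_exp hx).1 (by linarith)⟩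

lemma natFloor_neg_log_div_two_of_mem_meshPiece {j : ℕ} {x : ℝ} (hx : x ∈ meshPiece j) :
    ⌊-log x / 2⌋₊ = j := by
  obtain ⟨-, h₁, h₂⟩ := mem_meshPiece_iff.1 hx
  rw [Nat.floor_eq_iff (by linarith [(Nat.cast_nonneg j : (0 : ℝ) ≤ j)])]
  constructor <;> linarith

lemma mem_meshPiece_natFloor {x : ℝ} (hx : x ∈ Ioo 0 1) (hne : ∀ k : ℕ, x ≠ exp (-(2 * k))) :
    x ∈ meshPiece ⌊-log x / 2⌋₊ := by
  have hlog : 0 < -log x := neg_pos.2 (log_neg hx.1 hx.2)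
  have hle : (⌊-log x / 2⌋₊ : ℝ) ≤ -log x / 2 := Nat.floor_le (by positivity)
  have hlt : -log x / 2 < ⌊-log x / 2⌋₊ + 1 := Nat.lt_floor_add_one _
  have hne' : 2 * (⌊-log x / 2⌋₊ : ℝ) ≠ -log x := fun h =>
    hne ⌊-log x / 2⌋₊ (by rw [h, neg_neg, exp_log hx.1])
  exact mem_meshPiece_iff.2 ⟨hx.1, lt_of_le_of_ne (by linarith) hne', by linarith⟩

noncomputable def alternating (a b : ℝ) (x : ℝ) : ℝ := if Even ⌊-log x / 2⌋₊ then a else b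

lemma alternating_of_mem_meshPiece (a b : ℝ) {j : ℕ} {x : ℝ} (hx : x ∈ meshPiece j) :
    alternating a b x = if Even j then a else b := by
  rw [alternating, natFloor_neg_log_div_two_of_mem_meshPiece hx]

lemma measurable_alternating (a b : ℝ) : Measurable (alternating a b) := by
  have hfloor : Measurable fun x : ℝ => ⌊-log x / 2⌋₊ :=
    Nat.measurable_floor.comp (measurable_log.neg.div_const 2)
  exact Measurable.ite (hfloor (MeasurableSet.of_discrete (s := {n | Even n})))
    measurable_const measurable_const

lemma sq_sub_alternating_le (a b x y : ℝ) :
    (alternating a b y - alternating a b x) ^ 2 ≤ (a - b) ^ 2 := by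
  unfold alternating
  split_ifs <;> nlinarith [sq_nonneg (a - b)]

lemma sq_sub_alternating_of_mem_meshPiece_succ (a b : ℝ) {j : ℕ} {x y : ℝ}
    (hx : x ∈ meshPiece (j + 1)) (hy : y ∈ meshPiece j) :
    (alternating a b y - alternating a b x) ^ 2 = (a - b) ^ 2 := by
  simp only [alternating_of_mem_meshPiece a b hx, alternating_of_mem_meshPiece a b hy,
    Nat.even_add_one]
  by_cases hj : Even j <;> simp [hj, sub_sq_comm]

lemma ae_eq_alternating {a b : ℝ} {u : ℝ → ℝ}
    (hu : ∀ j : ℕ, ∀ x ∈ meshPiece j, u x = if Even j then a else b) :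
    ∀ᵐ x, x ∈ Ioo (0 : ℝ) 1 → u x = alternating a b x := by
  have hnull : volume (range fun k : ℕ => exp (-(2 * (k : ℝ)))) = 0 :=
    (countable_range _).measure_zero _
  filter_upwards [measure_eq_zero_iff_ae_notMem.1 hnull] with x hx hx01
  have hpiece := mem_meshPiece_natFloor hx01 fun k hk => hx ⟨k, hk.symm⟩
  rw [hu _ x hpiece, alternating_of_mem_meshPiece a b hpiece]

noncomputable def shiftIntegral (u : ℝ → ℝ) (h : ℝ) : ℝ :=
  ∫ x in Ioo (0 : ℝ) (1 - h), (u (x + h) - u x) ^ 2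

/-- `ω₁(u,t)₂²` in the paper's notation. -/
noncomputable def modulusSq (u : ℝ → ℝ) (t : ℝ) : ℝ :=
  sSup {I : ℝ | ∃ h ∈ Ioc (0 : ℝ) t, I = shiftIntegral u h}

lemma shiftIntegral_congr {f g : ℝ → ℝ} (hfg : ∀ᵐ x, x ∈ Ioo (0 : ℝ) 1 → f x = g x) {h : ℝ}
    (hh : 0 ≤ h) : shiftIntegral f h = shiftIntegral g h := by
  have hshift : ∀ᵐ x, x + h ∈ Ioo (0 : ℝ) 1 → f (x + h) = g (x + h) :=
    (measurePreserving_add_right volume h).quasiMeasurePreserving.ae hfg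
  refine setIntegral_congr_ae measurableSet_Ioo ?_
  filter_upwards [hfg, hshift] with x hx hxh ⟨h₀, h₁⟩
  rw [hx ⟨h₀, by linarith⟩, hxh ⟨by linarith, by linarith⟩]

lemma shiftIntegral_alternating_le (a b : ℝ) {h : ℝ} (hh : 0 ≤ h) :
    shiftIntegral (alternating a b) h ≤ (a - b) ^ 2 := by
  have hvol : volume.real (Ioo (0 : ℝ) (1 - h)) ≤ 1 := by
    rw [measureReal_def, Real.volume_Ioo, ENNReal.toReal_ofReal']
    exact max_le (by linarith) zero_le_one
  calc shiftIntegral (alternating a b) h ≤ ‖shiftIntegral (alternating a b) h‖ := le_norm_self _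
    _ ≤ (a - b) ^ 2 * volume.real (Ioo (0 : ℝ) (1 - h)) :=
      norm_setIntegral_le_of_norm_le_const measure_Ioo_lt_top fun x _ => by
        rw [Real.norm_of_nonneg (sq_nonneg _)]
        exact sq_sub_alternating_le a b _ _
    _ ≤ (a - b) ^ 2 := mul_le_of_le_one_right (sq_nonneg _) hvol

lemma mem_meshPiece_of_mem_window {j : ℕ} {t x : ℝ} (ht : t ≤ exp (-(2 * ((j : ℝ) + 2))))
    (hx : x ∈ Ioo (exp (-(2 * ((j : ℝ) + 1))) - t) (exp (-(2 * ((j : ℝ) + 1))))) :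
    x ∈ meshPiece (j + 1) ∧ x + t ∈ meshPiece j := by
  set p := exp (-(2 * ((j : ℝ) + 2)))
  have hp : 0 < p := exp_pos _
  have he : 3 ≤ exp 2 := by linarith [add_one_le_exp (2 : ℝ)]
  have h₁ : exp (-(2 * ((j : ℝ) + 1))) = p * exp 2 := by rw [← exp_add]; ring_nf
  have h₀ : exp (-(2 * (j : ℝ))) = p * exp 2 * exp 2 := by rw [← exp_add, ← exp_add]; ring_nf
  rw [h₁] at hx
  obtain ⟨hx₁, hx₂⟩ := hx
  refine ⟨⟨?_, ?_⟩, ⟨?_, ?_⟩⟩ <;> push_cast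
  · rw [show -(2 * ((j : ℝ) + 1 + 1)) = -(2 * ((j : ℝ) + 2)) by ring]
    nlinarith
  · rw [h₁]; exact hx₂
  · rw [h₁]; linarith
  · have hpe : 3 * p ≤ p * exp 2 := by nlinarith
    rw [h₀]; nlinarith [mul_le_mul_of_nonneg_left he (mul_pos hp (exp_pos 2)).le]

lemma sum_setIntegral_le_setIntegral {ι X : Type*} [MeasurableSpace X] {μ : Measure X}
    {f : X → ℝ} {S : Set X} {s : Finset ι} {E : ι → Set X} (hf : IntegrableOn f S μ)
    (hf₀ : 0 ≤ᵐ[μ.restrict S] f) (hE : ∀ i ∈ s, MeasurableSet (E i)) (hES : ∀ i ∈ s, E i ⊆ S)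
    (hd : (s : Set ι).Pairwise (Function.onFun Disjoint E)) :
    ∑ i ∈ s, ∫ x in E i, f x ∂μ ≤ ∫ x in S, f x ∂μ := by
  rw [← integral_biUnion_finset s hE hd fun i hi => hf.mono_set (hES i hi)]
  exact setIntegral_mono_set hf hf₀ (iUnion₂_subset hES).eventuallyLE

lemma integrableOn_sq_sub_alternating (a b t : ℝ) {s : Set ℝ} (hs : volume s ≠ ⊤) :
    IntegrableOn (fun x => (alternating a b (x + t) - alternating a b x) ^ 2) s := by
  have hmeas := measurable_alternating a b
  refine Integrable.mono' (integrableOn_const hs (C := (a - b) ^ 2))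
    (((hmeas.comp (measurable_add_const t)).sub hmeas).pow_const 2).aestronglyMeasurable ?_
  refine ae_of_all _ fun x => ?_
  rw [Real.norm_of_nonneg (sq_nonneg _)]
  exact sq_sub_alternating_le a b _ _

lemma natCast_mul_le_shiftIntegral_alternating (a b : ℝ) {t : ℝ} (ht : 0 < t) {N : ℕ}
    (hN : t ≤ exp (-(2 * ((N : ℝ) + 1)))) :
    N * t * (a - b) ^ 2 ≤ shiftIntegral (alternating a b) t := by
  set W : ℕ → Set ℝ := fun j => Ioo (exp (-(2 * ((j : ℝ) + 1))) - t) (exp (-(2 * ((j : ℝ) + 1))))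
  have hW : ∀ j ∈ Finset.range N, ∀ x ∈ W j, x ∈ meshPiece (j + 1) ∧ x + t ∈ meshPiece j := by
    intro j hj x hx
    refine mem_meshPiece_of_mem_window (hN.trans (exp_le_exp.2 ?_)) hx
    have : (j : ℝ) + 1 ≤ N := by exact_mod_cast Finset.mem_range.1 hj
    linarith
  have hWS : ∀ j ∈ Finset.range N, W j ⊆ Ioo 0 (1 - t) := by
    intro j hj x hx
    obtain ⟨hx₁, hx₂⟩ := hW j hj x hx
    have h₁ : exp (-(2 * (j : ℝ))) ≤ 1 := exp_le_one_iff.2 (neg_nonpos.2 (by positivity))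
    exact ⟨(mem_meshPiece_iff.1 hx₁).1, by linarith [hx₂.2]⟩
  have hd : (Finset.range N : Set ℕ).Pairwise (Function.onFun Disjoint W) := by
    intro i hi j hj hij
    refine disjoint_left.2 fun x hxi hxj => hij ?_
    have hi' := natFloor_neg_log_div_two_of_mem_meshPiece (hW i hi x hxi).1
    have hj' := natFloor_neg_log_div_two_of_mem_meshPiece (hW j hj x hxj).1
    omega
  have hWint : ∀ j ∈ Finset.range N,
      ∫ x in W j, (alternating a b (x + t) - alternating a b x) ^ 2 = t * (a - b) ^ 2 := by
    intro j hj
    rw [setIntegral_congr_fun measurableSet_Ioo fun x hx =>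
      sq_sub_alternating_of_mem_meshPiece_succ a b (hW j hj x hx).1 (hW j hj x hx).2]
    simp [ht.le]
  calc (N : ℝ) * t * (a - b) ^ 2
      = ∑ j ∈ Finset.range N, ∫ x in W j, (alternating a b (x + t) - alternating a b x) ^ 2 := by
        rw [Finset.sum_congr rfl hWint]; simp [mul_assoc]
    _ ≤ shiftIntegral (alternating a b) t :=
        sum_setIntegral_le_setIntegral (integrableOn_sq_sub_alternating a b t measure_Ioo_lt_top.ne)
          (ae_of_all _ fun _ => sq_nonneg _) (fun _ _ => measurableSet_Ioo) hWS hd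

lemma mul_abs_log_le_shiftIntegral_alternating (a b : ℝ) {t : ℝ} (ht₀ : 0 < t)
    (ht : t < exp (-8)) : 1 / 4 * (a - b) ^ 2 * t * |log t| ≤ shiftIntegral (alternating a b) t := by
  set L := -log t
  have hL : 8 < L := by linarith [(log_lt_iff_lt_exp ht₀).2 ht]
  have habs : |log t| = L := abs_of_neg (by linarith)
  set N := ⌊L / 2 - 1⌋₊
  have hN₁ : (N : ℝ) ≤ L / 2 - 1 := Nat.floor_le (by linarith)
  have hN₂ : L / 2 - 1 < N + 1 := Nat.lt_floor_add_one _
  have htN : t ≤ exp (-(2 * ((N : ℝ) + 1))) := by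
    rw [← exp_log ht₀]; exact exp_le_exp.2 (by linarith)
  calc 1 / 4 * (a - b) ^ 2 * t * |log t| ≤ N * t * (a - b) ^ 2 := by
        rw [habs]
        nlinarith [mul_nonneg (sq_nonneg (a - b)) ht₀.le]
    _ ≤ shiftIntegral (alternating a b) t := natCast_mul_le_shiftIntegral_alternating a b ht₀ htN

lemma bddAbove_shiftIntegral_of_ae_eq_alternating {a b : ℝ} {u : ℝ → ℝ}
    (hu : ∀ᵐ x, x ∈ Ioo (0 : ℝ) 1 → u x = alternating a b x) (t : ℝ) :
    BddAbove {I : ℝ | ∃ h ∈ Ioc (0 : ℝ) t, I = shiftIntegral u h} := by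
  refine ⟨(a - b) ^ 2, ?_⟩
  rintro _ ⟨h, hh, rfl⟩
  rw [shiftIntegral_congr hu hh.1.le]
  exact shiftIntegral_alternating_le a b hh.1.le

lemma exists_le_rpow_mul_sqrt_of_mul_abs_log_le {S : ℝ → ℝ} {c t₀ : ℝ} (hc : 0 < c)
    (ht₀ : 0 < t₀) (hS : ∀ t, 0 < t → t < t₀ → c * t * |log t| ≤ S t) (M : ℝ) :
    ∃ t, 0 < t ∧ M ≤ t ^ (-(1 / 2 : ℝ)) * √(S t) := by
  set L := max (|log t₀| + 1) (M ^ 2 / c)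
  have hL₁ : |log t₀| + 1 ≤ L := le_max_left _ _
  have hL₂ : M ^ 2 ≤ c * L := by rw [← div_le_iff₀' hc]; exact le_max_right _ _
  have ht : exp (-L) < t₀ := by
    rw [← lt_log_iff_exp_lt ht₀]; linarith [neg_abs_le (log t₀)]
  have hlog : |log (exp (-L))| = L := by
    rw [log_exp, abs_neg, abs_of_pos (by linarith [abs_nonneg (log t₀)])]
  refine ⟨exp (-L), exp_pos _, ?_⟩
  have hSt := hS _ (exp_pos _) ht
  rw [hlog] at hSt
  rw [rpow_neg (exp_pos _).le, ← sqrt_eq_rpow, inv_mul_eq_div, ← sqrt_div' _ (exp_pos _).le]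
  refine (le_abs_self M).trans (abs_le_sqrt ?_)
  rw [le_div_iff₀ (exp_pos _)]
  nlinarith [exp_pos (-L)]

theorem stmt2_general (a b : ℝ) (hab : a ≠ b) (u : ℝ → ℝ)
    (hu : ∀ j : ℕ, ∀ x ∈ Ioo (Real.exp (-(2*((j:ℝ)+1)))) (Real.exp (-(2*(j:ℝ)))),
        u x = if Even j then a else b) :
    (∃ c > 0, ∃ t0 > 0, ∀ t : ℝ, 0 < t → t < t0 →
        c * |a - b|^2 * t * |Real.log t| ≤
          sSup {I : ℝ | ∃ h ∈ Ioc (0:ℝ) t,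
            I = ∫ x in Ioo (0:ℝ) (1-h), (u (x+h) - u x)^2})
    ∧ ∀ M' : ℝ, ∃ t : ℝ, 0 < t ∧
        M' ≤ t ^ (-(1/2 : ℝ)) * Real.sqrt
          (sSup {I : ℝ | ∃ h ∈ Ioc (0:ℝ) t,
            I = ∫ x in Ioo (0:ℝ) (1-h), (u (x+h) - u x)^2}) := by
  have hae := ae_eq_alternating hu
  have hlower : ∀ t : ℝ, 0 < t → t < exp (-8) →
      1 / 4 * |a - b| ^ 2 * t * |log t| ≤ modulusSq u t := fun t ht₀ ht => by
    rw [sq_abs]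
    calc 1 / 4 * (a - b) ^ 2 * t * |log t|
        ≤ shiftIntegral (alternating a b) t := mul_abs_log_le_shiftIntegral_alternating a b ht₀ ht
      _ = shiftIntegral u t := (shiftIntegral_congr hae ht₀.le).symm
      _ ≤ modulusSq u t :=
        le_csSup (bddAbove_shiftIntegral_of_ae_eq_alternating hae t) ⟨t, ⟨ht₀, le_rfl⟩, rfl⟩
  have hc : 0 < 1 / 4 * |a - b| ^ 2 := by have := abs_pos.2 (sub_ne_zero.2 hab); positivity
  exact ⟨⟨1 / 4, by norm_num, exp (-8), exp_pos _, hlower⟩,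
    exists_le_rpow_mul_sqrt_of_mul_abs_log_le hc (exp_pos _) hlower⟩

/-- A two-valued alternating piecewise constant function on the geometric mesh
`x_j = e^{-2j}` has modulus of smoothness `ω₁(u,t)₂² ≳ |a-b|² t |ln t|`, so that
`sup_{t>0} t^{-1/2} ω₁(u,t)₂ = ∞`, i.e. `u ∉ B^{1/2}_{2,∞}(0,1)`. -/
theorem stmt2 (a b : ℝ) (hab : a ≠ b) (u : ℝ → ℝ)
    (hu : ∀ j : ℕ, ∀ x ∈ Ioo (Real.exp (-(2*((j:ℝ)+1)))) (Real.exp (-(2*(j:ℝ)))),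
        u x = if Even j then a else b)
    (M : ℝ) (hbd : ∀ x, |u x| ≤ M) :
    (∃ c > 0, ∃ t0 > 0, ∀ t : ℝ, 0 < t → t < t0 →
        c * |a - b|^2 * t * |Real.log t| ≤
          sSup {I : ℝ | ∃ h ∈ Ioc (0:ℝ) t,
            I = ∫ x in Ioo (0:ℝ) (1-h), (u (x+h) - u x)^2})
    ∧ ∀ M' : ℝ, ∃ t : ℝ, 0 < t ∧
        M' ≤ t ^ (-(1/2 : ℝ)) * Real.sqrt
          (sSup {I : ℝ | ∃ h ∈ Ioc (0:ℝ) t,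
            I = ∫ x in Ioo (0:ℝ) (1-h), (u (x+h) - u x)^2}) :=
  stmt2_general a b hab u hu
end

section
/- Let $V$ be a finite-dimensional real Hilbert space with inner product $a(\cdot,\cdot)$, and $V = \sum_{\ell=0}^L \mathcal{V}_\ell$ a (not necessarily direct) sum of subspaces $\mathcal{V}_\ell \subseteq V$ equipped with symmetric positive definite bilinear forms $a_\ell$. Suppose there is $C_1 > 0$ such that for every decomposition $u = \sum_{\ell=0}^L u_\ell$ with $u_\ell \in \mathcal{V}_\ell$ one has $a(u,u) \leq C_1 \sum_{\ell=0}^L a_\ell(u_\ell,u_\ell)$, and $C_0 > 0$ such that every $u \in V$ admits some decomposition $u = \sum_\ell u_\ell$ with $\sum_\ell a_\ell(u_\ell,u_\ell) \leq C_0\, a(u,u)$. Define the additive Schwarz operator $P = \sum_{\ell=0}^L E_\ell A_\ell^{-1} E_\ell^* A$ where $E_\ell: \mathcal{V}_\ell \to V$ is the inclusion, $A$ and $A_\ell$ are the operators induced by $a$ and $a_\ell$. Then all eigenvalues $\lambda$ of $P$ satisfy $C_0^{-1} \leq \lambda \leq C_1$. -/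
/-!
Each `Pl ℓ` is the `a ℓ`-Ritz projection onto `𝒱 ℓ`; it is a positive operator for the inner
product and maps `𝒱 ℓ` onto itself. Let `u` be an eigenvector. Since
`⟪P u, u⟫ = ∑ a ℓ (Pl ℓ u) (Pl ℓ u)`, the boundedness constant applied to the decomposition
`P u = ∑ Pl ℓ u` gives `λ ≤ C1`. For the lower bound, write the stable decomposition of `u` as
`u = ∑ Pl ℓ (p ℓ)`. Then `⟪u, u⟫ = ∑ ⟪Pl ℓ (p ℓ), u⟫`, and Cauchy–Schwarz for the positive
semidefinite form `(x, y) ↦ ∑ ⟪Pl ℓ (x ℓ), y ℓ⟫` on families gives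
`⟪u, u⟫² ≤ (∑ a ℓ (Pl ℓ (p ℓ)) (Pl ℓ (p ℓ))) ⟪P u, u⟫ ≤ C0 ⟪u, u⟫ ⟪P u, u⟫`.
-/

open scoped RealInnerProductSpace

section AdditiveSchwarz

variable {V : Type*} [NormedAddCommGroup V] [InnerProductSpace ℝ V]

theorem LinearMap.IsPositive.sum_inner_sq_le {ι : Type*} [Fintype ι] {T : ι → V →ₗ[ℝ] V}
    (hT : ∀ i, (T i).IsPositive) (x y : ι → V) :
    (∑ i, ⟪T i (x i), y i⟫) ^ 2 ≤ (∑ i, ⟪T i (x i), x i⟫) * ∑ i, ⟪T i (y i), y i⟫ := by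
  let B : LinearMap.BilinForm ℝ (ι → V) :=
    ∑ i, (innerₗ V).compl₁₂ ((T i).comp (LinearMap.proj i)) (LinearMap.proj i)
  have hB (x y : ι → V) : B x y = ∑ i, ⟪T i (x i), y i⟫ := by
    simp [B, LinearMap.sum_apply]
  have hB_symm : LinearMap.IsSymm B := ⟨fun x y => by
    simp only [hB, RingHom.id_apply]
    exact Finset.sum_congr rfl fun i _ => by rw [(hT i).isSymmetric, real_inner_comm]⟩
  have hB_nonneg (x : ι → V) : 0 ≤ B x x := by
    rw [hB]
    exact Finset.sum_nonneg fun i _ => (hT i).inner_nonneg_left _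
  simpa only [hB] using B.apply_sq_le_of_symm hB_nonneg hB_symm x y

theorem LinearMap.IsPositive.inner_self_sq_le_of_eq_sum {ι : Type*} [Fintype ι]
    {T : ι → V →ₗ[ℝ] V} (hT : ∀ i, (T i).IsPositive) {u : V} {p : ι → V}
    (hu : u = ∑ i, T i (p i)) :
    ⟪u, u⟫ ^ 2 ≤ (∑ i, ⟪T i (p i), p i⟫) * ⟪(∑ i, T i) u, u⟫ := by
  have h := LinearMap.IsPositive.sum_inner_sq_le hT p (fun _ => u)
  rwa [← sum_inner, ← hu, ← sum_inner, ← LinearMap.sum_apply] at h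

/-- In operator notation `Q = E A_W⁻¹ E* A`, with `E : W → V` the inclusion and `A_W` the
operator of `b` on `W`. -/
structure IsRitzProjection (W : Submodule ℝ V) (b : V → V → ℝ) (Q : V →ₗ[ℝ] V) : Prop where
  mem : ∀ u, Q u ∈ W
  apply_left : ∀ u, ∀ v ∈ W, b (Q u) v = ⟪u, v⟫

namespace IsRitzProjection

variable {W : Submodule ℝ V} {b : V → V → ℝ} {Q : V →ₗ[ℝ] V}

theorem zero_left (hQ : IsRitzProjection W b Q) {v : V} (hv : v ∈ W) : b 0 v = 0 := by
  simpa using hQ.apply_left 0 v hv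

theorem apply_self (hQ : IsRitzProjection W b Q) (u : V) : b (Q u) (Q u) = ⟪Q u, u⟫ := by
  rw [hQ.apply_left u _ (hQ.mem u), real_inner_comm]

theorem nonneg_of_pos (hQ : IsRitzProjection W b Q) (hpos : ∀ u ∈ W, u ≠ 0 → 0 < b u u)
    {u : V} (hu : u ∈ W) : 0 ≤ b u u := by
  rcases eq_or_ne u 0 with rfl | hu0
  · exact (hQ.zero_left hu).ge
  · exact (hpos u hu hu0).le

theorem isPositive (hQ : IsRitzProjection W b Q) (hsymm : ∀ u ∈ W, ∀ v ∈ W, b u v = b v u)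
    (hnonneg : ∀ u ∈ W, 0 ≤ b u u) : Q.IsPositive := by
  refine Q.isPositive_iff.2 ⟨fun x y => ?_, fun x => hQ.apply_self x ▸ hnonneg _ (hQ.mem x)⟩
  rw [real_inner_comm, ← hQ.apply_left y _ (hQ.mem x), hsymm _ (hQ.mem y) _ (hQ.mem x),
    hQ.apply_left x _ (hQ.mem y)]

theorem range_eq [FiniteDimensional ℝ V] (hQ : IsRitzProjection W b Q) :
    LinearMap.range Q = W := by
  let Q' : W →ₗ[ℝ] W := Q.restrict fun u _ => hQ.mem u
  have hinj : Function.Injective Q' := by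
    rw [← LinearMap.ker_eq_bot, LinearMap.ker_eq_bot']
    intro z hz
    have hQz : Q z = 0 := congrArg Subtype.val hz
    have h := hQ.apply_left z z z.2
    rw [hQz, hQ.zero_left z.2] at h
    exact Subtype.ext (inner_self_eq_zero.mp h.symm)
  refine le_antisymm (by rintro _ ⟨x, rfl⟩; exact hQ.mem x) fun v hv => ?_
  obtain ⟨p, hp⟩ := LinearMap.injective_iff_surjective.mp hinj ⟨v, hv⟩
  exact ⟨p, congrArg Subtype.val hp⟩

end IsRitzProjection

theorem inner_self_le_of_stable_decomposition [FiniteDimensional ℝ V] {ι : Type*} [Fintype ι]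
    {𝒱 : ι → Submodule ℝ V} {a : ι → V → V → ℝ} {Q : ι → V →ₗ[ℝ] V}
    (hQ : ∀ i, IsRitzProjection (𝒱 i) (a i) (Q i)) (hQ_pos : ∀ i, (Q i).IsPositive)
    {C : ℝ} {u : V} {w : ι → V} (hw : ∀ i, w i ∈ 𝒱 i) (hu : u = ∑ i, w i)
    (hC : ∑ i, a i (w i) (w i) ≤ C * ⟪u, u⟫) :
    ⟪u, u⟫ ≤ C * ⟪(∑ i, Q i) u, u⟫ := by
  rcases eq_or_ne u 0 with rfl | hu0
  · simp
  have hM : 0 < ⟪u, u⟫ := real_inner_self_pos.2 hu0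
  have hT : 0 ≤ ⟪(∑ i, Q i) u, u⟫ :=
    (LinearMap.isPositive_sum _ fun i _ => hQ_pos i).inner_nonneg_left u
  choose p hp using fun i => ((hQ i).range_eq ▸ hw i : w i ∈ LinearMap.range (Q i))
  have hS : ∑ i, a i (w i) (w i) = ∑ i, ⟪Q i (p i), p i⟫ := by
    simp only [← hp, (hQ _).apply_self]
  have hCS := LinearMap.IsPositive.inner_self_sq_le_of_eq_sum hQ_pos (p := p)
    (by simpa only [hp] using hu)
  rw [← hS] at hCS
  nlinarith [mul_le_mul_of_nonneg_right hC hT]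

theorem Module.End.HasEigenvalue.inv_le_and_le {T : V →ₗ[ℝ] V} {lam C₀ C₁ : ℝ}
    (hlam : Module.End.HasEigenvalue T lam) (hC₀ : 0 < C₀)
    (hlower : ∀ u, ⟪u, u⟫ ≤ C₀ * ⟪T u, u⟫) (hupper : ∀ u, ⟪T u, T u⟫ ≤ C₁ * ⟪T u, u⟫) :
    C₀⁻¹ ≤ lam ∧ lam ≤ C₁ := by
  obtain ⟨u, hu⟩ := hlam.exists_hasEigenvector
  have hM : 0 < ⟪u, u⟫ := real_inner_self_pos.2 hu.2
  have hlo := hlower u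
  have hup := hupper u
  simp only [hu.apply_eq_smul, real_inner_smul_left, real_inner_smul_right] at hlo hup
  have hC₀lam : 1 ≤ C₀ * lam := by nlinarith
  have hlam_pos : 0 < lam := pos_of_mul_pos_right (one_pos.trans_le hC₀lam) hC₀.le
  refine ⟨(inv_le_iff_one_le_mul₀' hC₀).2 hC₀lam, ?_⟩
  nlinarith [mul_pos hlam_pos hM]

end AdditiveSchwarz

theorem stmt6_general {V : Type*} [NormedAddCommGroup V] [InnerProductSpace ℝ V]
    [FiniteDimensional ℝ V] (L : ℕ)
    (𝒱 : Fin (L+1) → Submodule ℝ V)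
    (a : Fin (L+1) → V → V → ℝ)
    (hsymm : ∀ ℓ u v, a ℓ u v = a ℓ v u)
    (hpos : ∀ ℓ, ∀ u ∈ 𝒱 ℓ, u ≠ 0 → 0 < a ℓ u u)
    (C0 C1 : ℝ) (hC0 : 0 < C0)
    (hupper : ∀ (u : V) (w : Fin (L+1) → V), (∀ ℓ, w ℓ ∈ 𝒱 ℓ) → u = ∑ ℓ, w ℓ →
        ⟪u, u⟫ ≤ C1 * ∑ ℓ, a ℓ (w ℓ) (w ℓ))
    (hlower : ∀ u : V, ∃ w : Fin (L+1) → V, (∀ ℓ, w ℓ ∈ 𝒱 ℓ) ∧ u = ∑ ℓ, w ℓ ∧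
        ∑ ℓ, a ℓ (w ℓ) (w ℓ) ≤ C0 * ⟪u, u⟫)
    (Pl : Fin (L+1) → (V →ₗ[ℝ] V))
    (hPmem : ∀ ℓ u, Pl ℓ u ∈ 𝒱 ℓ)
    (hPdef : ∀ ℓ (u : V), ∀ v ∈ 𝒱 ℓ, a ℓ (Pl ℓ u) v = ⟪u, v⟫)
    (P : V →ₗ[ℝ] V) (hP : P = ∑ ℓ, Pl ℓ)
    (lam : ℝ) (hlam : Module.End.HasEigenvalue P lam) :
    C0⁻¹ ≤ lam ∧ lam ≤ C1 := by
  subst hP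
  have hR (ℓ) : IsRitzProjection (𝒱 ℓ) (a ℓ) (Pl ℓ) := ⟨hPmem ℓ, hPdef ℓ⟩
  have hPl_pos (ℓ) : (Pl ℓ).IsPositive :=
    (hR ℓ).isPositive (fun u _ v _ => hsymm ℓ u v) fun _ => (hR ℓ).nonneg_of_pos (hpos ℓ)
  refine hlam.inv_le_and_le hC0 (fun u => ?_) (fun u => ?_)
  · obtain ⟨w, hw, hu, hS⟩ := hlower u
    exact inner_self_le_of_stable_decomposition hR hPl_pos hw hu hS
  · have h := hupper _ (fun ℓ => Pl ℓ u) (fun ℓ => hPmem ℓ u) (LinearMap.sum_apply ..)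
    simpa only [(hR _).apply_self, ← sum_inner, ← LinearMap.sum_apply] using h

/-- Abstract additive Schwarz theory: eigenvalue bounds for the additive Schwarz
operator `P = ∑ Pℓ`, where `Pℓ u ∈ 𝒱ℓ` is defined by `aℓ(Pℓ u, v) = a(u,v)` for
`v ∈ 𝒱ℓ`, under the stable-decomposition and boundedness hypotheses. -/
theorem stmt6 {V : Type*} [NormedAddCommGroup V] [InnerProductSpace ℝ V]
    [FiniteDimensional ℝ V] (L : ℕ)
    (𝒱 : Fin (L+1) → Submodule ℝ V)
    (hsum : ∀ u : V, ∃ w : Fin (L+1) → V, (∀ ℓ, w ℓ ∈ 𝒱 ℓ) ∧ u = ∑ ℓ, w ℓ)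
    (a : Fin (L+1) → V → V → ℝ)
    (hsymm : ∀ ℓ u v, a ℓ u v = a ℓ v u)
    (hpos : ∀ ℓ, ∀ u ∈ 𝒱 ℓ, u ≠ 0 → 0 < a ℓ u u)
    (C0 C1 : ℝ) (hC0 : 0 < C0) (hC1 : 0 < C1)
    (hupper : ∀ (u : V) (w : Fin (L+1) → V), (∀ ℓ, w ℓ ∈ 𝒱 ℓ) → u = ∑ ℓ, w ℓ →
        ⟪u, u⟫ ≤ C1 * ∑ ℓ, a ℓ (w ℓ) (w ℓ))
    (hlower : ∀ u : V, ∃ w : Fin (L+1) → V, (∀ ℓ, w ℓ ∈ 𝒱 ℓ) ∧ u = ∑ ℓ, w ℓ ∧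
        ∑ ℓ, a ℓ (w ℓ) (w ℓ) ≤ C0 * ⟪u, u⟫)
    (Pl : Fin (L+1) → (V →ₗ[ℝ] V))
    (hPmem : ∀ ℓ u, Pl ℓ u ∈ 𝒱 ℓ)
    (hPdef : ∀ ℓ (u : V), ∀ v ∈ 𝒱 ℓ, a ℓ (Pl ℓ u) v = ⟪u, v⟫)
    (P : V →ₗ[ℝ] V) (hP : P = ∑ ℓ, Pl ℓ)
    (lam : ℝ) (hlam : Module.End.HasEigenvalue P lam) :
    C0⁻¹ ≤ lam ∧ lam ≤ C1 :=
  stmt6_general L 𝒱 a hsymm hpos C0 C1 hC0 hupper hlower Pl hPmem hPdef P hP lam hlam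
end

section
/- Let $V$ be a finite-dimensional real Hilbert space with inner product $a$, subspaces $\mathcal{V}_0,\dots,\mathcal{V}_L \subseteq V$ with SPD forms $a_\ell$, and suppose: (strengthened Cauchy-Schwarz) $a(u_k,u_\ell) \leq \mathcal{E}_{\ell k} \sqrt{a(u_k,u_k)}\sqrt{a_\ell(u_\ell,u_\ell)}$ for all $k \leq \ell$ and $u_k \in \mathcal{V}_k$, $u_\ell \in \mathcal{V}_\ell$, where $\mathcal{E}$ is a symmetric nonnegative matrix; and (local stability) $a(u_\ell,u_\ell) \leq C_{\rm loc}\, a_\ell(u_\ell,u_\ell)$ for all $u_\ell \in \mathcal{V}_\ell$. Then for every decomposition $u = \sum_{\ell=0}^L u_\ell$ with $u_\ell \in \mathcal{V}_\ell$, $a(u,u) \leq 2 C_{\rm loc}^{1/2} \rho(\mathcal{E}) \sum_{\ell=0}^L a_\ell(u_\ell,u_\ell)$, where $\rho(\mathcal{E})$ is the spectral radius of $\mathcal{E}$. -/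
open scoped RealInnerProductSpace

/-!
Write `x ℓ = √(a ℓ (w ℓ) (w ℓ))`. Local stability turns the strengthened Cauchy-Schwarz inequality
into `⟪w k, w ℓ⟫ ≤ √C_loc ℰ ℓ k x k x ℓ` for `k ≤ ℓ`, and by the symmetry of `ℰ` and of the inner
product for all `k, ℓ`. Summing over all pairs bounds `⟪u, u⟫` by `√C_loc` times the quadratic form
`x ⬝ᵥ ℰ *ᵥ x`, which is at most `ρ(ℰ) ‖x‖²` because `ρ(ℰ) - ℰ` is positive semidefinite. This gives
the estimate even without the factor `2`.
-/

namespace Matrix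

variable {n : Type*} [Fintype n] [DecidableEq n]

theorem le_sSup_abs_spectrum_toLin' (M : Matrix n n ℝ) {μ : ℝ} (hμ : μ ∈ spectrum ℝ M) :
    μ ≤ sSup ((fun μ => |μ|) '' spectrum ℝ (toLin' M)) := by
  have hspec : spectrum ℝ (toLin' M) = spectrum ℝ M := AlgEquiv.spectrum_eq toLinAlgEquiv' M
  rw [hspec]
  exact (le_abs_self μ).trans <|
    le_csSup (M.finite_spectrum.image _).bddAbove (Set.mem_image_of_mem _ hμ)

theorem IsHermitian.dotProduct_mulVec_le {M : Matrix n n ℝ} (hM : M.IsHermitian) {c : ℝ}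
    (hc : ∀ μ ∈ spectrum ℝ M, μ ≤ c) (x : n → ℝ) :
    x ⬝ᵥ M *ᵥ x ≤ c * (x ⬝ᵥ x) := by
  have hpsd : (algebraMap ℝ _ c - M).PosSemidef := by
    refine posSemidef_iff_isHermitian_and_spectrum_nonneg.mpr ⟨?_, ?_⟩
    · rw [Algebra.algebraMap_eq_smul_one]
      exact (isHermitian_one.smul (IsSelfAdjoint.all c)).sub hM
    · rw [← spectrum.singleton_sub_eq]
      rintro _ ⟨_, rfl, μ, hμ, rfl⟩
      exact sub_nonneg.mpr (hc μ hμ)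
  have := hpsd.dotProduct_mulVec_nonneg x
  simp only [star_trivial, Algebra.algebraMap_eq_smul_one, sub_mulVec, smul_mulVec, one_mulVec,
    dotProduct_sub, dotProduct_smul, smul_eq_mul] at this
  linarith

end Matrix

open Matrix

section StrengthenedCauchySchwarz

variable {ι V : Type*} [LinearOrder ι] [NormedAddCommGroup V] [InnerProductSpace ℝ V]
  {ℰ : Matrix ι ι ℝ} {C : ℝ} {w : ι → V} {A : ι → ℝ}

theorem inner_le_of_strengthened_cauchy_schwarz (hE : ℰ.IsSymm) (hEnn : ∀ k ℓ, 0 ≤ ℰ k ℓ)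
    (hC : 0 ≤ C) (hCS : ∀ k ℓ, k ≤ ℓ → ⟪w k, w ℓ⟫ ≤ ℰ ℓ k * √⟪w k, w k⟫ * √(A ℓ))
    (hloc : ∀ ℓ, ⟪w ℓ, w ℓ⟫ ≤ C * A ℓ) (k ℓ : ι) :
    ⟪w k, w ℓ⟫ ≤ √C * (√(A ℓ) * (ℰ ℓ k * √(A k))) := by
  have ordered : ∀ k ℓ, k ≤ ℓ → ⟪w k, w ℓ⟫ ≤ √C * (√(A ℓ) * (ℰ ℓ k * √(A k))) := by
    intro k ℓ hkℓ
    have hk : √⟪w k, w k⟫ ≤ √C * √(A k) := by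
      rw [← Real.sqrt_mul hC]
      exact Real.sqrt_le_sqrt (hloc k)
    calc ⟪w k, w ℓ⟫ ≤ ℰ ℓ k * √⟪w k, w k⟫ * √(A ℓ) := hCS k ℓ hkℓ
      _ ≤ ℰ ℓ k * (√C * √(A k)) * √(A ℓ) := by gcongr; exact hEnn ℓ k
      _ = √C * (√(A ℓ) * (ℰ ℓ k * √(A k))) := by ring
  rcases le_total k ℓ with hkℓ | hℓk
  · exact ordered k ℓ hkℓ
  · calc ⟪w k, w ℓ⟫ = ⟪w ℓ, w k⟫ := real_inner_comm _ _
      _ ≤ √C * (√(A k) * (ℰ k ℓ * √(A ℓ))) := ordered ℓ k hℓk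
      _ = √C * (√(A ℓ) * (ℰ ℓ k * √(A k))) := by rw [hE.apply]; ring

variable [Fintype ι] [DecidableEq ι]

theorem inner_sum_self_le_of_strengthened_cauchy_schwarz (hE : ℰ.IsSymm)
    (hEnn : ∀ k ℓ, 0 ≤ ℰ k ℓ) {ρ : ℝ} (hρ : ∀ μ ∈ spectrum ℝ ℰ, μ ≤ ρ) (hC : 0 ≤ C)
    (hA : ∀ ℓ, 0 ≤ A ℓ) (hCS : ∀ k ℓ, k ≤ ℓ → ⟪w k, w ℓ⟫ ≤ ℰ ℓ k * √⟪w k, w k⟫ * √(A ℓ))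
    (hloc : ∀ ℓ, ⟪w ℓ, w ℓ⟫ ≤ C * A ℓ) :
    ⟪∑ ℓ, w ℓ, ∑ ℓ, w ℓ⟫ ≤ √C * ρ * ∑ ℓ, A ℓ := by
  set x : ι → ℝ := fun ℓ => √(A ℓ)
  have hxx : x ⬝ᵥ x = ∑ ℓ, A ℓ := by
    simp only [dotProduct, x, Real.mul_self_sqrt (hA _)]
  have hquad : x ⬝ᵥ ℰ *ᵥ x ≤ ρ * (x ⬝ᵥ x) :=
    (isHermitian_iff_isSymm.mpr hE).dotProduct_mulVec_le hρ x
  calc ⟪∑ ℓ, w ℓ, ∑ ℓ, w ℓ⟫ = ∑ ℓ, ∑ k, ⟪w k, w ℓ⟫ := by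
        rw [sum_inner, Finset.sum_comm]; simp only [inner_sum]
    _ ≤ ∑ ℓ, ∑ k, √C * (x ℓ * (ℰ ℓ k * x k)) := by
        gcongr with ℓ _ k _
        exact inner_le_of_strengthened_cauchy_schwarz hE hEnn hC hCS hloc k ℓ
    _ = √C * (x ⬝ᵥ ℰ *ᵥ x) := by
        simp only [dotProduct, mulVec, Finset.mul_sum]
    _ ≤ √C * ρ * ∑ ℓ, A ℓ := by
        rw [mul_assoc, ← hxx]; gcongr

end StrengthenedCauchySchwarz

theorem stmt7_general {V : Type*} [NormedAddCommGroup V] [InnerProductSpace ℝ V] (L : ℕ)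
    (𝒱 : Fin (L+1) → Submodule ℝ V)
    (a : Fin (L+1) → V → V → ℝ)
    (ℰ : Matrix (Fin (L+1)) (Fin (L+1)) ℝ) (hE : ℰ.IsSymm)
    (hEnn : ∀ k l, 0 ≤ ℰ k l)
    (ρ : ℝ) (hρ : ρ = sSup ((fun μ => |μ|) '' spectrum ℝ (Matrix.toLin' ℰ)))
    (Cloc : ℝ) (hCloc : 0 ≤ Cloc)
    (hCS : ∀ k ℓ : Fin (L+1), k ≤ ℓ → ∀ uk ∈ 𝒱 k, ∀ ul ∈ 𝒱 ℓ,
        ⟪uk, ul⟫ ≤ ℰ ℓ k * Real.sqrt ⟪uk, uk⟫ * Real.sqrt (a ℓ ul ul))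
    (hloc : ∀ ℓ, ∀ u ∈ 𝒱 ℓ, ⟪u, u⟫ ≤ Cloc * a ℓ u u)
    (u : V) (w : Fin (L+1) → V) (hw : ∀ ℓ, w ℓ ∈ 𝒱 ℓ) (hu : u = ∑ ℓ, w ℓ) :
    ⟪u, u⟫ ≤ 2 * Real.sqrt Cloc * ρ * ∑ ℓ, a ℓ (w ℓ) (w ℓ) := by
  have hloc' : ∀ ℓ, ⟪w ℓ, w ℓ⟫ ≤ Cloc * a ℓ (w ℓ) (w ℓ) := fun ℓ => hloc ℓ _ (hw ℓ)
  rcases hCloc.eq_or_lt with hC0 | hCpos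
  · -- `Cloc = 0` forces every `w ℓ` to vanish, while `a ℓ (w ℓ) (w ℓ)` may then be negative.
    have hw0 : ∀ ℓ, w ℓ = 0 := fun ℓ =>
      inner_self_eq_zero.mp (le_antisymm (by simpa [← hC0] using hloc' ℓ) real_inner_self_nonneg)
    simp [hu, hw0, ← hC0]
  · have ha : ∀ ℓ, 0 ≤ a ℓ (w ℓ) (w ℓ) := fun ℓ =>
      nonneg_of_mul_nonneg_right (real_inner_self_nonneg.trans (hloc' ℓ)) hCpos
    have hbound := inner_sum_self_le_of_strengthened_cauchy_schwarz hE hEnn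
      (fun μ hμ => hρ ▸ ℰ.le_sSup_abs_spectrum_toLin' hμ) hCloc ha
      (fun k ℓ hkℓ => hCS k ℓ hkℓ _ (hw k) _ (hw ℓ)) hloc'
    rw [← hu] at hbound
    linarith [real_inner_self_nonneg (x := u)]

/-- Strengthened Cauchy-Schwarz plus local stability imply the upper bound
`a(u,u) ≤ 2 √C_loc ρ(ℰ) ∑ aℓ(uℓ,uℓ)` for any decomposition `u = ∑ uℓ`. -/
theorem stmt7 {V : Type*} [NormedAddCommGroup V] [InnerProductSpace ℝ V] (L : ℕ)
    (𝒱 : Fin (L+1) → Submodule ℝ V)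
    (a : Fin (L+1) → V → V → ℝ)
    (hsymm : ∀ ℓ u v, a ℓ u v = a ℓ v u)
    (hpos : ∀ ℓ, ∀ u ∈ 𝒱 ℓ, u ≠ 0 → 0 < a ℓ u u)
    (ℰ : Matrix (Fin (L+1)) (Fin (L+1)) ℝ) (hE : ℰ.IsSymm)
    (hEnn : ∀ k l, 0 ≤ ℰ k l)
    (ρ : ℝ) (hρ : ρ = sSup ((fun μ => |μ|) '' spectrum ℝ (Matrix.toLin' ℰ)))
    (Cloc : ℝ) (hCloc : 0 ≤ Cloc)
    (hCS : ∀ k ℓ : Fin (L+1), k ≤ ℓ → ∀ uk ∈ 𝒱 k, ∀ ul ∈ 𝒱 ℓ,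
        ⟪uk, ul⟫ ≤ ℰ ℓ k * Real.sqrt ⟪uk, uk⟫ * Real.sqrt (a ℓ ul ul))
    (hloc : ∀ ℓ, ∀ u ∈ 𝒱 ℓ, ⟪u, u⟫ ≤ Cloc * a ℓ u u)
    (u : V) (w : Fin (L+1) → V) (hw : ∀ ℓ, w ℓ ∈ 𝒱 ℓ) (hu : u = ∑ ℓ, w ℓ) :
    ⟪u, u⟫ ≤ 2 * Real.sqrt Cloc * ρ * ∑ ℓ, a ℓ (w ℓ) (w ℓ) :=
  stmt7_general L 𝒱 a ℰ hE hEnn ρ hρ Cloc hCloc hCS hloc u w hw hu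
end
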